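/- arXiv:1202.3406 — 2 statements merged into one kernel-verified Lean document; each statement's English description precedes it below -/
import Mathlib

section
/- Let M be a matroid whose ground set is not a base and let O be a circuit of M⁺. Then there exist a circuit O₁ of M and a circuit O₂ of M/O₁ with O = O₁ ∪ O₂ and O₁ ∩ O₂ = ∅. -/
def Matroid.IsCircuit' {α : Type*} (M : Matroid α) (C : Set α) : Prop :=
  M.Dep C ∧ ∀ ⦃D⦄, M.Dep D → D ⊆ C → D = C

/-!
A set is independent in `M⁺` exactly when it becomes `M`-independent after removing one element.
So a circuit `O` of `M⁺` is `M`-dependent and contains an `M`-circuit `O₁`, and the bases of `O₁`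
are the sets `O₁ \ {e}`, `e ∈ O₁`. Contracting `O₁` therefore turns the `M⁺`-dependence of `O`
into the `M ／ O₁`-dependence of `O \ O₁`, and the `M⁺`-independence of each `O \ {x}` (which
forces the removed element `e` into `O₁`) into the `M ／ O₁`-independence of `O \ O₁ \ {x}`.
-/

open Set Matroid

namespace Matroid

variable {α : Type*} {M N : Matroid α} {C O X : Set α}

lemma isCircuit'_iff_isCircuit : M.IsCircuit' C ↔ M.IsCircuit C :=
  isCircuit_iff.symm

lemma eq_contract_of_indep_iff (hC : C ⊆ M.E) (hE : N.E = M.E \ C)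
    (hI : ∀ I, N.Indep I ↔ Disjoint I C ∧ ∃ J, M.IsBasis J C ∧ M.Indep (I ∪ J)) :
    N = M ／ C := by
  refine ext_indep hE fun I _ ↦ ⟨fun hNI ↦ ?_, fun hCI ↦ ?_⟩
  · obtain ⟨hdj, J, hJ, hIJ⟩ := (hI I).1 hNI
    exact hJ.contract_indep_iff.2 ⟨hIJ, hdj.symm⟩
  · obtain ⟨J, hJ⟩ := M.exists_isBasis C
    obtain ⟨hIJ, hdj⟩ := hJ.contract_indep_iff.1 hCI
    exact (hI I).2 ⟨hdj.symm, J, hJ, hIJ⟩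

lemma indep_iff_exists_indep_sdiff_singleton_of_isBase_iff (hM : ¬ M.IsBase M.E)
    (hB : ∀ X, N.IsBase X ↔ ∃ B e, M.IsBase B ∧ e ∈ M.E \ B ∧ X = insert e B) :
    N.Indep X ↔ X ⊆ M.E ∧ ∃ e, M.Indep (X \ {e}) := by
  simp only [indep_iff (M := N), hB]
  constructor
  · rintro ⟨_, ⟨B, e, hB, he, rfl⟩, hXB⟩
    exact ⟨hXB.trans (insert_subset he.1 hB.subset_ground), e,
      hB.indep.subset (sdiff_singleton_subset_iff.2 hXB)⟩
  rintro ⟨hXE, e, hXe⟩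
  obtain ⟨B, hB, hXeB⟩ := hXe.exists_isBase_superset
  have hXB : X ⊆ insert e B := sdiff_singleton_subset_iff.1 hXeB
  by_cases he : e ∈ M.E \ B
  · exact ⟨_, ⟨B, e, hB, he, rfl⟩, hXB⟩
  obtain ⟨f, hf⟩ : (M.E \ B).Nonempty :=
    nonempty_of_ssubset (hB.subset_ground.ssubset_of_ne fun h ↦ hM (h ▸ hB))
  refine ⟨_, ⟨B, f, hB, hf, rfl⟩, fun x hx ↦ mem_insert_of_mem _ ?_⟩
  obtain rfl | hxB := hXB hx
  · exact not_not.1 fun hxB ↦ he ⟨hXE hx, hxB⟩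
  · exact hxB

lemma IsCircuit.contract_isCircuit_sdiff (hC : M.IsCircuit C) (hCO : C ⊆ O) (hOE : O ⊆ M.E)
    (hO : ∀ e, ¬ M.Indep (O \ {e})) (hOx : ∀ x ∈ O, ∃ e, M.Indep ((O \ {x}) \ {e})) :
    (M ／ C).IsCircuit (O \ C) := by
  obtain ⟨f, hf⟩ := hC.nonempty
  rw [isCircuit_iff_dep_forall_sdiff_singleton_indep, dep_iff, contract_ground,
    (hC.sdiff_singleton_isBasis hf).contract_indep_iff]
  refine ⟨⟨fun h ↦ hO f (h.1.subset ?_), sdiff_subset_sdiff_left hOE⟩, fun x hx ↦ ?_⟩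
  · grind
  obtain ⟨e, he⟩ := hOx x hx.1
  have heC : e ∈ C := by
    by_contra heC
    exact hC.not_indep (he.subset (by grind))
  rw [(hC.sdiff_singleton_isBasis heC).contract_indep_iff]
  exact ⟨he.subset (by grind), disjoint_sdiff_right.mono_right sdiff_subset⟩

end Matroid

/-- Let `Mp = M⁺` (bases `B + e` with `B` a base of `M`, `e ∉ B`; the ground set is not a base),
and let `con C` denote the contraction `M/C`. Then every circuit `O` of `M⁺` is the disjoint
union of a circuit `O₁` of `M` and a circuit `O₂` of `M/O₁`. -/
theorem circuit_of_Mplus_decomposes {α : Type*} (M Mp : Matroid α)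
    (hEb : ¬ M.IsBase M.E) (hE : Mp.E = M.E)
    (hB : ∀ X, Mp.IsBase X ↔ ∃ B e, M.IsBase B ∧ e ∈ M.E \ B ∧ X = insert e B)
    (con : Set α → Matroid α)
    (hcon : ∀ C ⊆ M.E, (con C).E = M.E \ C ∧
      ∀ I, (con C).Indep I ↔ Disjoint I C ∧ ∃ J, M.IsBasis J C ∧ M.Indep (I ∪ J))
    (O : Set α) (hO : Mp.IsCircuit' O) :
    ∃ O₁ O₂, M.IsCircuit' O₁ ∧ (con O₁).IsCircuit' O₂ ∧
      O = O₁ ∪ O₂ ∧ O₁ ∩ O₂ = ∅ := by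
  rw [isCircuit'_iff_isCircuit] at hO
  have hOE : O ⊆ M.E := hE ▸ hO.subset_ground
  have hMp (X : Set α) := indep_iff_exists_indep_sdiff_singleton_of_isBase_iff (X := X) hEb hB
  have hOdep (e : α) : ¬ M.Indep (O \ {e}) := fun h ↦ hO.not_indep ((hMp O).2 ⟨hOE, e, h⟩)
  obtain ⟨x, hx⟩ := hO.nonempty
  obtain ⟨O₁, hO₁O, hO₁⟩ :=
    (dep_iff.2 ⟨fun h ↦ hOdep x (h.subset sdiff_subset), hOE⟩).exists_isCircuit_subset
  obtain ⟨hconE, hconI⟩ := hcon O₁ (hO₁O.trans hOE)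
  refine ⟨O₁, O \ O₁, isCircuit'_iff_isCircuit.2 hO₁, ?_, (union_sdiff_cancel hO₁O).symm,
    inter_sdiff_self _ _⟩
  rw [eq_contract_of_indep_iff (hO₁O.trans hOE) hconE hconI, isCircuit'_iff_isCircuit]
  exact hO₁.contract_isCircuit_sdiff hO₁O hOE hOdep
    fun y hy ↦ ((hMp _).1 (hO.sdiff_singleton_indep hy)).2
end

section
/- There exists an infinite matroid M together with a circuit C of M and a cocircuit D of M such that C ∩ D is infinite. -/
/-!
In the free extension `M + e` of a matroid `M` by a new element `e`, the set `insert e B` is a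
circuit for every base `B` of `M`, and `insert e K` is a cocircuit for every cocircuit `K` of `M`.
Given two bases `B₁`, `B₂` of a matroid `P`, the circuit `insert e B₁` of `P + e` is a cocircuit
of `N = (P + e)✶`, and the complement of `B₂` is a base of `N`. Extending `N` freely by a second
new element turns them into a cocircuit and a circuit of `N + f`, both containing `B₁ \ B₂`.
For the partition matroid whose blocks are the pairs `{2k, 2k + 1}`, the even and the odd
elements are two disjoint infinite bases.
-/

open Set

namespace Matroid

variable {α : Type*} {M : Matroid α} {e x : α} {B I J K : Set α}

lemma IsBase.not_spanning_sdiff_singleton (hB : M.IsBase B) (hx : x ∈ B) :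
    ¬ M.Spanning (B \ {x}) :=
  fun h ↦ (isBase_iff_minimal_spanning.1 hB).notMem_of_prop_sdiff_singleton h hx

lemma IsCocircuit.exists_isBase_inter_eq_singleton (hK : M.IsCocircuit K) (hx : x ∈ K) :
    ∃ B, M.IsBase B ∧ K ∩ B = {x} := by
  rw [isCocircuit_iff_minimal] at hK
  obtain ⟨B, hB, hKB⟩ : ∃ B, M.IsBase B ∧ ¬ ((K \ {x}) ∩ B).Nonempty := by
    by_contra! h
    exact hK.notMem_of_prop_sdiff_singleton h hx
  have hsub : K ∩ B ⊆ {x} := fun y hy ↦ by_contra fun hyx ↦ hKB ⟨y, ⟨hy.1, hyx⟩, hy.2⟩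
  obtain ⟨y, hy⟩ := hK.prop B hB
  exact ⟨B, hB, hsub.antisymm (singleton_subset_iff.2 (hsub hy ▸ hy))⟩

lemma Indep.exists_insert_ne_of_not_isBase_insert (hI : M.Indep I) (hIB : ¬ M.IsBase I)
    (hnb : ∀ y ∉ I, ¬ M.IsBase (insert y I)) (hB : M.IsBase B) (y : α) :
    ∃ x ∈ B \ I, x ≠ y ∧ M.Indep (insert x I) := by
  obtain ⟨x, hx, hxI⟩ := hI.exists_insert_of_not_isBase hIB hB
  obtain rfl | hxy := eq_or_ne x y
  · obtain ⟨z, hz, hzI⟩ := hxI.exists_insert_of_not_isBase (hnb x hx.2) hB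
    exact ⟨z, ⟨hz.1, fun h ↦ hz.2 (mem_insert_of_mem _ h)⟩, fun h ↦ hz.2 (h ▸ mem_insert _ _),
      hzI.subset (insert_subset_insert (subset_insert _ _))⟩
  · exact ⟨x, hx, hxy, hxI⟩

/-- The element `e` is placed in general position: it may be added to an independent set
exactly when that set does not span `M`. -/
def FreeExtensionIndep (M : Matroid α) (e : α) (I : Set α) : Prop :=
  M.Indep (I \ {e}) ∧ (e ∈ I → ¬ M.Spanning (I \ {e}))

lemma maximal_freeExtensionIndep_of_isBase (he : e ∉ M.E) (hB : M.IsBase B) :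
    Maximal (M.FreeExtensionIndep e) B := by
  have heB : e ∉ B := fun h ↦ he (hB.subset_ground h)
  refine ⟨⟨by rw [sdiff_singleton_eq_self heB]; exact hB.indep, fun h ↦ (heB h).elim⟩,
    fun K hK hBK ↦ ?_⟩
  have hBK' : B = K \ {e} := hB.eq_of_subset_indep hK.1 (subset_sdiff_singleton hBK heB)
  have heK : e ∉ K := fun h ↦ hK.2 h (hBK' ▸ hB.spanning)
  rw [hBK', sdiff_singleton_eq_self heK]

lemma maximal_freeExtensionIndep_insert (he : e ∉ M.E) (hB : M.IsBase B) (hx : x ∈ B) :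
    Maximal (M.FreeExtensionIndep e) (insert e (B \ {x})) := by
  have hJe : insert e (B \ {x}) \ {e} = B \ {x} :=
    insert_sdiff_self_of_notMem fun h ↦ he (hB.subset_ground h.1)
  refine ⟨⟨?_, fun _ ↦ ?_⟩, fun K hK hJK y hyK ↦ by_contra fun hy ↦ ?_⟩
  · rw [hJe]; exact hB.indep.subset sdiff_subset
  · rw [hJe]; exact hB.not_spanning_sdiff_singleton hx
  have hBK : insert y (B \ {x}) ⊆ K \ {e} :=
    insert_subset ⟨hyK, fun h ↦ hy (h ▸ mem_insert _ _)⟩ (hJe ▸ sdiff_subset_sdiff_left hJK)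
  have hyB : y ∉ B \ {x} := fun h ↦ hy (mem_insert_of_mem _ h)
  have hbase : M.IsBase (insert y (B \ {x})) := by
    obtain rfl | hyx := eq_or_ne y x
    · rwa [insert_sdiff_singleton, insert_eq_of_mem hx]
    · exact hB.exchange_isBase_of_indep (fun h ↦ hyB ⟨h, hyx⟩) (hK.1.subset hBK)
  exact hK.2 (hJK (mem_insert _ _)) (hbase.spanning.superset hBK hK.1.subset_ground)

lemma isBase_or_exists_of_maximal_freeExtensionIndep (he : e ∉ M.E)
    (hJ : Maximal (M.FreeExtensionIndep e) J) :
    M.IsBase J ∨ ∃ B, M.IsBase B ∧ ∃ x ∈ B, J = insert e (B \ {x}) := by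
  obtain ⟨hJi, hJs⟩ := hJ.prop
  by_cases heJ : e ∈ J
  · obtain ⟨B, hB, hJB⟩ := hJi.exists_isBase_superset
    obtain ⟨x, hxB, hxJ⟩ := exists_of_ssubset <|
      hJB.ssubset_of_ne fun h ↦ hJs heJ (h ▸ hB.spanning)
    have hxe : x ≠ e := fun h ↦ he (h ▸ hB.subset_ground hxB)
    have hind : M.Indep (insert x (J \ {e})) := hB.indep.subset (insert_subset hxB hJB)
    have hsp : M.Spanning (insert x (J \ {e})) := by
      by_contra hsp
      refine hxJ ⟨hJ.mem_of_prop_insert ?_, hxe⟩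
      rw [FreeExtensionIndep, ← insert_sdiff_singleton_comm hxe]
      exact ⟨hind, fun _ ↦ hsp⟩
    refine .inr ⟨_, hind.isBase_of_spanning hsp, x, mem_insert _ _, ?_⟩
    rw [insert_sdiff_self_of_notMem hxJ, insert_sdiff_singleton, insert_eq_of_mem heJ]
  · rw [sdiff_singleton_eq_self heJ] at hJi
    refine .inl (hJi.isBase_of_spanning (by_contra fun hsp ↦ heJ (hJ.mem_of_prop_insert ?_)))
    rw [FreeExtensionIndep, insert_sdiff_self_of_notMem heJ]
    exact ⟨hJi, fun _ ↦ hsp⟩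

lemma maximal_freeExtensionIndep_iff (he : e ∉ M.E) :
    Maximal (M.FreeExtensionIndep e) J ↔
      M.IsBase J ∨ ∃ B, M.IsBase B ∧ ∃ x ∈ B, J = insert e (B \ {x}) := by
  refine ⟨isBase_or_exists_of_maximal_freeExtensionIndep he, ?_⟩
  rintro (hJ | ⟨B, hB, x, hx, rfl⟩)
  exacts [maximal_freeExtensionIndep_of_isBase he hJ, maximal_freeExtensionIndep_insert he hB hx]

lemma FreeExtensionIndep.exists_insert_of_not_maximal (he : e ∉ M.E)
    (hI : M.FreeExtensionIndep e I) (hImax : ¬ Maximal (M.FreeExtensionIndep e) I)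
    (hJ : Maximal (M.FreeExtensionIndep e) J) :
    ∃ x ∈ J \ I, M.FreeExtensionIndep e (insert x I) := by
  rw [maximal_freeExtensionIndep_iff he] at hImax hJ
  by_cases heI : e ∈ I
  · have hnb : ∀ y ∉ I \ {e}, ¬ M.IsBase (insert y (I \ {e})) := fun y hy hyb ↦
      hImax (.inr ⟨_, hyb, y, mem_insert _ _, by
        rw [insert_sdiff_self_of_notMem hy, insert_sdiff_singleton, insert_eq_of_mem heI]⟩)
    have hI₀ : ¬ M.IsBase (I \ {e}) := fun h ↦ hI.2 heI h.spanning
    obtain ⟨B, hB, y, hJB⟩ : ∃ B, M.IsBase B ∧ ∃ y, J \ {e} = B \ {y} := by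
      obtain hJ | ⟨B, hB, y, -, rfl⟩ := hJ
      · exact ⟨J, hJ, e, rfl⟩
      · exact ⟨B, hB, y, insert_sdiff_self_of_notMem fun h ↦ he (hB.subset_ground h.1)⟩
    obtain ⟨x, hxB, hxy, hxI⟩ := hI.1.exists_insert_ne_of_not_isBase_insert hI₀ hnb hB y
    have hxe : x ≠ e := fun h ↦ he (h ▸ hB.subset_ground hxB.1)
    refine ⟨x, ⟨?_, fun h ↦ hxB.2 ⟨h, hxe⟩⟩, ?_⟩
    · exact (sdiff_subset : J \ {e} ⊆ J) (hJB ▸ ⟨hxB.1, hxy⟩)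
    rw [FreeExtensionIndep, ← insert_sdiff_singleton_comm hxe]
    exact ⟨hxI, fun _ hsp ↦ hnb x hxB.2 (hxI.isBase_of_spanning hsp)⟩
  · rw [FreeExtensionIndep, sdiff_singleton_eq_self heI] at hI
    have hIb : ¬ M.IsBase I := fun h ↦ hImax (.inl h)
    by_cases heJ : e ∈ J
    · refine ⟨e, ⟨heJ, heI⟩, ?_⟩
      rw [FreeExtensionIndep, insert_sdiff_self_of_notMem heI]
      exact ⟨hI.1, fun _ hsp ↦ hIb (hI.1.isBase_of_spanning hsp)⟩
    · obtain hJ | ⟨_, -, _, -, rfl⟩ := hJ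
      · obtain ⟨x, hx, hxI⟩ := hI.1.exists_insert_of_not_isBase hIb hJ
        have hxe : e ∉ insert x I := by rintro (rfl | h); exacts [heJ hx.1, heI h]
        refine ⟨x, hx, ?_, fun h ↦ (hxe h).elim⟩
        rwa [sdiff_singleton_eq_self hxe]
      · exact (heJ (mem_insert _ _)).elim

lemma existsMaximalSubsetProperty_freeExtensionIndep (he : e ∉ M.E) (X : Set α) :
    ExistsMaximalSubsetProperty (M.FreeExtensionIndep e) X := by
  intro I hI hIX
  obtain ⟨J₀, hJ₀, hIJ₀⟩ := hI.1.subset_isBasis'_of_subset (sdiff_subset_sdiff_left hIX)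
  have heJ₀ : e ∉ J₀ := fun h ↦ (hJ₀.subset h).2 rfl
  have hJ₀X : J₀ ⊆ X := hJ₀.subset.trans sdiff_subset
  have hmax : ∀ K, M.FreeExtensionIndep e K → K ⊆ X → J₀ ⊆ K → K \ {e} ⊆ J₀ :=
    fun K hK hKX hJ₀K ↦ hJ₀.2 ⟨hK.1, sdiff_subset_sdiff_left hKX⟩ (subset_sdiff_singleton hJ₀K heJ₀)
  have hglobal : ∀ J, Maximal (M.FreeExtensionIndep e) J → I ⊆ J → J ⊆ X →
      ∃ J, I ⊆ J ∧ Maximal (fun K ↦ M.FreeExtensionIndep e K ∧ K ⊆ X) J :=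
    fun J hJ hIJ hJX ↦ ⟨J, hIJ, ⟨hJ.prop, hJX⟩, fun K hK hJK ↦ hJ.2 hK.1 hJK⟩
  by_cases heX : e ∈ X
  · by_cases hsp : M.Spanning J₀
    · have hJ₀B := hJ₀.indep.isBase_of_spanning hsp
      by_cases heI : e ∈ I
      · obtain ⟨x, hxJ₀, hxI⟩ : ∃ x ∈ J₀, x ∉ I \ {e} := not_subset.1 fun h ↦
          hI.2 heI (hsp.superset h hI.1.subset_ground)
        refine hglobal _ (maximal_freeExtensionIndep_insert he hJ₀B hxJ₀) (fun y hy ↦ ?_)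
          (insert_subset heX (sdiff_subset.trans hJ₀X))
        obtain rfl | hye := eq_or_ne y e
        exacts [mem_insert _ _, .inr ⟨hIJ₀ ⟨hy, hye⟩, fun h ↦ hxI (h ▸ ⟨hy, hye⟩)⟩]
      · refine hglobal _ (maximal_freeExtensionIndep_of_isBase he hJ₀B) ?_ hJ₀X
        rwa [← sdiff_singleton_eq_self heI]
    · refine ⟨insert e J₀, ?_, ⟨?_, insert_subset heX hJ₀X⟩, fun K hK hJK ↦ ?_⟩
      · exact (subset_insert_sdiff_singleton e I).trans (insert_subset_insert hIJ₀)
      · rw [FreeExtensionIndep, insert_sdiff_self_of_notMem heJ₀]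
        exact ⟨hJ₀.indep, fun _ ↦ hsp⟩
      · exact (subset_insert_sdiff_singleton e K).trans
          (insert_subset_insert (hmax K hK.1 hK.2 ((subset_insert _ _).trans hJK)))
  · have hJ₀i : M.FreeExtensionIndep e J₀ :=
      ⟨by rw [sdiff_singleton_eq_self heJ₀]; exact hJ₀.indep, fun h ↦ (heJ₀ h).elim⟩
    refine ⟨J₀, ?_, ⟨hJ₀i, hJ₀X⟩, fun K hK hJK ↦ ?_⟩
    · rwa [← sdiff_singleton_eq_self fun h ↦ heX (hIX h)]
    · rw [← sdiff_singleton_eq_self fun h ↦ heX (hK.2 h)]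
      exact hmax K hK.1 hK.2 hJK

def freeExtension (M : Matroid α) (e : α) (he : e ∉ M.E) : Matroid α := IndepMatroid.matroid
  { E := insert e M.E
    Indep := M.FreeExtensionIndep e
    indep_empty := ⟨by simp, by simp⟩
    indep_subset := fun _ _ hJ hIJ ↦ ⟨hJ.1.subset (sdiff_subset_sdiff_left hIJ),
      fun heI hsp ↦ hJ.2 (hIJ heI) (hsp.superset (sdiff_subset_sdiff_left hIJ) hJ.1.subset_ground)⟩
    indep_aug := fun _ _ hI hImax hJ ↦ hI.exists_insert_of_not_maximal he hImax hJ
    indep_maximal := fun X _ ↦ existsMaximalSubsetProperty_freeExtensionIndep he X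
    subset_ground := fun I hI ↦ (subset_insert_sdiff_singleton e I).trans
      (insert_subset_insert hI.1.subset_ground) }

lemma freeExtension_isBase_iff (he : e ∉ M.E) :
    (M.freeExtension e he).IsBase J ↔
      M.IsBase J ∨ ∃ B, M.IsBase B ∧ ∃ x ∈ B, J = insert e (B \ {x}) :=
  maximal_freeExtensionIndep_iff he

lemma IsBase.insert_isCircuit_freeExtension (he : e ∉ M.E) (hB : M.IsBase B) :
    (M.freeExtension e he).IsCircuit (insert e B) := by
  have heB : e ∉ B := fun h ↦ he (hB.subset_ground h)
  rw [isCircuit_iff_dep_forall_sdiff_singleton_indep]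
  refine ⟨⟨fun h ↦ h.2 (mem_insert e B) ?_, insert_subset_insert hB.subset_ground⟩, ?_⟩
  · rw [insert_sdiff_self_of_notMem heB]
    exact hB.spanning
  rintro x (rfl | hxB)
  · rw [insert_sdiff_self_of_notMem heB]
    exact ((freeExtension_isBase_iff he).2 (.inl hB)).indep
  · rw [← insert_sdiff_singleton_comm (ne_of_mem_of_not_mem hxB heB).symm]
    exact ((freeExtension_isBase_iff he).2 (.inr ⟨B, hB, x, hxB, rfl⟩)).indep

lemma IsCocircuit.insert_isCocircuit_freeExtension (he : e ∉ M.E) (hK : M.IsCocircuit K) :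
    (M.freeExtension e he).IsCocircuit (insert e K) := by
  have heK : e ∉ K := fun h ↦ he (hK.subset_ground h)
  have hK' := isCocircuit_iff_minimal.1 hK
  rw [isCocircuit_iff_minimal]
  refine ⟨fun B' hB' ↦ ?_, fun Y hY hYK y hy ↦ by_contra fun hyY ↦ ?_⟩
  · obtain hB | ⟨B, -, x, -, rfl⟩ := (freeExtension_isBase_iff he).1 hB'
    · obtain ⟨z, hz⟩ := hK'.prop B' hB
      exact ⟨z, mem_insert_of_mem _ hz.1, hz.2⟩
    · exact ⟨e, mem_insert _ _, mem_insert _ _⟩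
  obtain ⟨B', hB', hB'y⟩ : ∃ B', (M.freeExtension e he).IsBase B' ∧ insert e K ∩ B' ⊆ {y} := by
    obtain rfl | hyK := hy
    · obtain ⟨x, hx⟩ := hK.nonempty
      obtain ⟨B, hB, hKB⟩ := hK.exists_isBase_inter_eq_singleton hx
      refine ⟨_, (freeExtension_isBase_iff he).2 (.inr ⟨B, hB, x, ?_, rfl⟩), ?_⟩
      · exact (hKB.symm ▸ mem_singleton x : x ∈ K ∩ B).2
      rintro z ⟨hz | hz, hz' | hz'⟩
      · exact hz
      · exact hz
      · exact (heK (hz' ▸ hz)).elim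
      · exact (hz'.2 (hKB ▸ ⟨hz, hz'.1⟩ : z ∈ ({x} : Set α))).elim
    · obtain ⟨B, hB, hKB⟩ := hK.exists_isBase_inter_eq_singleton hyK
      refine ⟨B, (freeExtension_isBase_iff he).2 (.inl hB), ?_⟩
      rintro z ⟨rfl | hz, hzB⟩
      · exact (he (hB.subset_ground hzB)).elim
      · exact hKB ▸ ⟨hz, hzB⟩
  obtain ⟨z, hzY, hzB'⟩ := hY B' hB'
  exact hyY ((hB'y ⟨hYK hzY, hzB'⟩ : z = y) ▸ hzY)

theorem exists_isCircuit_isCocircuit_sdiff_subset_inter {P : Matroid α} {B₁ B₂ : Set α} {f : α}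
    (hB₁ : P.IsBase B₁) (hB₂ : P.IsBase B₂) (he : e ∉ P.E) (hf : f ∉ insert e P.E) :
    ∃ (M : Matroid α) (C D : Set α), M.IsCircuit C ∧ M.IsCocircuit D ∧ B₁ \ B₂ ⊆ C ∩ D := by
  set N := (P.freeExtension e he)✶
  have hfN : f ∉ N.E := hf
  refine ⟨N.freeExtension f hfN, insert f (N.E \ B₂), insert f (insert e B₁), ?_, ?_, ?_⟩
  · exact ((freeExtension_isBase_iff he).2 (.inl hB₂)).compl_isBase_dual
      |>.insert_isCircuit_freeExtension hfN
  · exact (hB₁.insert_isCircuit_freeExtension he).isCocircuit.insert_isCocircuit_freeExtension hfN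
  · exact fun x hx ↦ ⟨.inr ⟨.inr (hB₁.subset_ground hx.1), hx.2⟩, .inr (.inr hx.1)⟩

end Matroid

open Matroid

def pairMatroid : Matroid ℕ := (freeOn {k | k ≠ 0}).comap (· / 2)

lemma pairMatroid_isBase {r : ℕ} (hr : r < 2) :
    pairMatroid.IsBase (range fun k ↦ 2 * k + 2 + r) := by
  have himage : ((· / 2) '' range fun k ↦ 2 * k + 2 + r) = {k | k ≠ 0} := by
    ext k
    simp only [mem_image, mem_range, exists_exists_eq_and, mem_ofPred_eq]
    exact ⟨fun ⟨j, hj⟩ ↦ by omega, fun hk ↦ ⟨k - 1, by omega⟩⟩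
  rw [pairMatroid, comap_isBase_iff, freeOn_isBasis_iff, himage,
    image_preimage_eq _ fun k ↦ ⟨2 * k, by omega⟩]
  refine ⟨⟨rfl, subset_rfl⟩, ?_, ?_⟩
  · rintro _ ⟨i, rfl⟩ _ ⟨j, rfl⟩ h
    simp only at h ⊢
    omega
  · rintro _ ⟨i, rfl⟩
    show (2 * i + 2 + r) / 2 ≠ 0
    omega

/-- There is an infinite matroid with a circuit `C` and a cocircuit `D` (a circuit of the dual)
such that `C ∩ D` is infinite. -/
theorem exists_wild_matroid :
    ∃ (M : Matroid ℕ) (C D : Set ℕ), M.E.Infinite ∧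
      M.IsCircuit' C ∧ M✶.IsCircuit' D ∧ (C ∩ D).Infinite := by
  obtain ⟨M, C, D, hC, hD, hCD⟩ := exists_isCircuit_isCocircuit_sdiff_subset_inter
    (pairMatroid_isBase (r := 0) (by norm_num)) (pairMatroid_isBase (r := 1) (by norm_num))
    (e := 0) (f := 1) (by simp [pairMatroid]) (by simp [pairMatroid])
  have hevens : ((range fun k ↦ 2 * k + 2 + 0) \ range fun k ↦ 2 * k + 2 + 1).Infinite := by
    rw [sdiff_eq_left.2 <| disjoint_left.2 ?_]
    · exact infinite_range_of_injective fun i j h ↦ by omega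
    rintro _ ⟨i, rfl⟩ ⟨j, h⟩
    simp only at h
    omega
  have hinf : (C ∩ D).Infinite := hevens.mono hCD
  exact ⟨M, C, D, hinf.mono (inter_subset_left.trans hC.subset_ground), isCircuit_iff.1 hC,
    isCircuit_iff.1 hD, hinf⟩
end
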